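/- arXiv:0811.3848 — 2 statements merged into one kernel-verified Lean document; each statement's English description precedes it below -/
import Mathlib

section
/- Let w = (wₙ)_{n≥1} be a weight sequence for which there exists a constant C > 0 with w_{mn} ≤ C wₘ wₙ for all m, n ∈ ℕ, and let 1 ≤ p < ∞. Then for all α, β ∈ ℓ_{w,p} one has ‖α⊗β‖_{w,p} ≤ C^{1/p} ‖α‖_{w,p} ‖β‖_{w,p}; in particular, ℓ_{w,p} is a stable Calkin space. -/
open scoped BigOperators

noncomputable section

/-- The space of complex null sequences `c₀`. -/
def c0 : Set (ℕ → ℂ) := {α | Filter.Tendsto α Filter.atTop (nhds 0)}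

/-- `rearrSum α n` is the supremum of `∑_{i ∈ F} |α i|` over finite sets `F ⊆ ℕ` with
`|F| = n`; for a null sequence it equals `α*₁ + ⋯ + α*ₙ` where `α*` is the decreasing
rearrangement of `(|α_n|)`. -/
def rearrSum (α : ℕ → ℂ) (n : ℕ) : ℝ :=
  sSup ((fun F : Finset ℕ => ∑ i ∈ F, ‖α i‖) '' {F | F.card = n})

/-- The decreasing rearrangement of a null sequence, 0-indexed:
`rearr α n = α*_{n+1}`. -/
def rearr (α : ℕ → ℂ) (n : ℕ) : ℝ := rearrSum α (n + 1) - rearrSum α n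

/-- A Calkin space: a linear subspace of `c₀` containing every null sequence whose
decreasing rearrangement is dominated termwise by that of one of its members. -/
def IsCalkinSpace (I : Set (ℕ → ℂ)) : Prop :=
  I ⊆ c0 ∧ (0 : ℕ → ℂ) ∈ I ∧
  (∀ α ∈ I, ∀ β ∈ I, α + β ∈ I) ∧
  (∀ (c : ℂ), ∀ α ∈ I, c • α ∈ I) ∧
  (∀ α ∈ I, ∀ β ∈ c0, (∀ n, rearr β n ≤ rearr α n) → β ∈ I)

/-- `tensorSum α β n` is the supremum of `∑_{(i,j) ∈ F} |α i| |β j|` over finite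
`F ⊆ ℕ × ℕ` with `|F| = n`; it equals `(α⊗β)₁ + ⋯ + (α⊗β)ₙ`. -/
def tensorSum (α β : ℕ → ℂ) (n : ℕ) : ℝ :=
  sSup ((fun F : Finset (ℕ × ℕ) => ∑ p ∈ F, ‖α p.1‖ * ‖β p.2‖) '' {F | F.card = n})

/-- The tensor sequence `α⊗β`: the decreasing rearrangement of the double sequence
`(|α_m β_n|)_{m,n}`, 0-indexed: `tensorSeq α β n = (α⊗β)_{n+1}`. -/
def tensorSeq (α β : ℕ → ℂ) (n : ℕ) : ℝ := tensorSum α β (n + 1) - tensorSum α β n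

/-- Embedding of real sequences into complex sequences. -/
def toC (f : ℕ → ℝ) : ℕ → ℂ := fun n => (f n : ℂ)

/-- The tensor product `𝔦⊗𝔧` of two Calkin spaces: the smallest Calkin space
containing `α⊗β` for all `α ∈ 𝔦`, `β ∈ 𝔧`. -/
def calkinTensor (I J : Set (ℕ → ℂ)) : Set (ℕ → ℂ) :=
  ⋂₀ {K | IsCalkinSpace K ∧ ∀ α ∈ I, ∀ β ∈ J, toC (tensorSeq α β) ∈ K}

/-- A Calkin space `𝔦` is stable if `𝔦⊗𝔦 = 𝔦`. -/
def IsStableCalkin (I : Set (ℕ → ℂ)) : Prop := IsCalkinSpace I ∧ calkinTensor I I = I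

/-- The principal Calkin space `⟨α⟩` generated by `α`: the smallest Calkin space
containing `α`. -/
def principalCalkin (α : ℕ → ℂ) : Set (ℕ → ℂ) := ⋂₀ {K | IsCalkinSpace K ∧ α ∈ K}

/-- `Kw ω α n = #{m : ω^{n+1} < α m ≤ ω^n}` (the sequence `α` being 0-indexed). -/
def Kw (ω : ℝ) (α : ℕ → ℝ) (n : ℕ) : ℕ :=
  Set.ncard {m : ℕ | ω ^ (n + 1) < α m ∧ α m ≤ ω ^ n}

/-- `K̃ₙ = Σ_{i=0}^n Kᵢ`. -/
def Ktil (ω : ℝ) (α : ℕ → ℝ) (n : ℕ) : ℕ := ∑ i ∈ Finset.range (n + 1), Kw ω α i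

/-- `Mₙ = Σ_{i+j=n} Kᵢ Kⱼ`. -/
def Mw (ω : ℝ) (α : ℕ → ℝ) (n : ℕ) : ℕ :=
  ∑ i ∈ Finset.range (n + 1), Kw ω α i * Kw ω α (n - i)

/-- `M̃ₙ = Σ_{i=0}^n Mᵢ`. -/
def Mtil (ω : ℝ) (α : ℕ → ℝ) (n : ℕ) : ℕ := ∑ i ∈ Finset.range (n + 1), Mw ω α i

/-- The Lorentz sequence space `ℓ_{w,p}`. -/
def lorentzSpace (w : ℕ → ℝ) (p : ℝ) : Set (ℕ → ℂ) :=
  {α | α ∈ c0 ∧ Summable (fun n => w n * (rearr α n) ^ p)}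

/-- The Lorentz norm `‖α‖_{w,p} = (Σₙ wₙ (α*ₙ)^p)^{1/p}`. -/
def lorentzNorm (w : ℕ → ℝ) (p : ℝ) (α : ℕ → ℂ) : ℝ :=
  (∑' n, w n * (rearr α n) ^ p) ^ (1 / p)

/-!
A nonnegative family `v` with finite superlevel sets can be enumerated greedily: repeatedly pick
a largest remaining value, breaking ties by a well-founded order. The `n`-th value picked is the
decreasing rearrangement `v*ₙ`.

Enumerate the products `α*ᵢ β*ⱼ` this way. They are antitone in `(i, j)`, so when `(i, j)` is
picked at step `k` all `(i+1)(j+1) - 1` pairs below it were picked earlier; hence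
`w_k ≤ w_{(i+1)(j+1)-1} ≤ C wᵢ wⱼ` and `w_k ((α⊗β)*_k)^p ≤ C (wᵢ (α*ᵢ)^p) (wⱼ (β*ⱼ)^p)`. Since the
enumeration is injective, summing over `k` gives `‖α⊗β‖ᵖ ≤ C ‖α‖ᵖ ‖β‖ᵖ`.

For stability, `ℓ_{w,p}` is a Calkin space (closure under sums comes from
`(α+β)*_{2n+1} ≤ (α+β)*_{2n} ≤ α*ₙ + β*ₙ`), the bound gives `ℓ_{w,p} ⊗ ℓ_{w,p} ⊆ ℓ_{w,p}`, and
`α ⊗ δ₀` has the same rearrangement as `α`, which gives the reverse inclusion.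
-/

open Finset Filter Topology Function

section SupSum

variable {ι κ : Type*}

def supSum (v : ι → ℝ) (n : ℕ) : ℝ :=
  sSup ((fun F : Finset ι => ∑ i ∈ F, v i) '' {F | F.card = n})

def decRearr (v : ι → ℝ) (n : ℕ) : ℝ := supSum v (n + 1) - supSum v n

theorem supSum_le [Infinite ι] {v : ι → ℝ} {n : ℕ} {c : ℝ}
    (h : ∀ F : Finset ι, F.card = n → ∑ i ∈ F, v i ≤ c) : supSum v n ≤ c := by
  obtain ⟨F, hF⟩ := Infinite.exists_subset_card_eq ι n
  exact csSup_le ⟨_, F, hF, rfl⟩ (by rintro _ ⟨F, hF, rfl⟩; exact h F hF)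

structure IsNullFamily (v : ι → ℝ) : Prop where
  nonneg : ∀ i, 0 ≤ v i
  finite_setOf_lt : ∀ ε > 0, {i | ε < v i}.Finite

namespace IsNullFamily

variable {u : ι → ℝ} {v : ι → ℝ}

theorem exists_pos_bound (hv : IsNullFamily v) : ∃ M > 0, ∀ i, v i ≤ M := by
  obtain ⟨M, hM⟩ := ((hv.finite_setOf_lt 1 one_pos).image v).bddAbove
  refine ⟨max M 1, by positivity, fun i => ?_⟩
  by_cases h : 1 < v i
  · exact (hM ⟨i, h, rfl⟩).trans (le_max_left _ _)
  · exact (not_lt.1 h).trans (le_max_right _ _)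

theorem bddAbove_sums (hv : IsNullFamily v) (n : ℕ) :
    BddAbove ((fun F : Finset ι => ∑ i ∈ F, v i) '' {F | F.card = n}) := by
  obtain ⟨M, -, hM⟩ := hv.exists_pos_bound
  refine ⟨n * M, ?_⟩
  rintro _ ⟨G, hG : G.card = n, rfl⟩
  calc ∑ i ∈ G, v i ≤ G.card • M := sum_le_card_nsmul _ _ _ fun i _ => hM i
    _ = n * M := by rw [hG, nsmul_eq_mul]

theorem le_supSum (hv : IsNullFamily v) (F : Finset ι) : ∑ i ∈ F, v i ≤ supSum v F.card :=
  le_csSup (hv.bddAbove_sums _) ⟨F, rfl, rfl⟩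

theorem mul {w : κ → ℝ} (hu : IsNullFamily u) (hw : IsNullFamily w) :
    IsNullFamily (fun q : ι × κ => u q.1 * w q.2) := by
  refine ⟨fun q => mul_nonneg (hu.nonneg _) (hw.nonneg _), fun ε hε => ?_⟩
  obtain ⟨Mu, hMu, hu_le⟩ := hu.exists_pos_bound
  obtain ⟨Mw, hMw, hw_le⟩ := hw.exists_pos_bound
  refine ((hu.finite_setOf_lt _ (div_pos hε hMw)).prod
    (hw.finite_setOf_lt _ (div_pos hε hMu))).subset ?_
  rintro ⟨i, j⟩ (h : ε < u i * w j)
  constructor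
  · rw [Set.mem_ofPred_eq, div_lt_iff₀ hMw]
    exact h.trans_le (mul_le_mul_of_nonneg_left (hw_le j) (hu.nonneg i))
  · rw [Set.mem_ofPred_eq, div_lt_iff₀ hMu]
    exact h.trans_le (by rw [mul_comm]; exact mul_le_mul_of_nonneg_left (hu_le i) (hw.nonneg j))

theorem comp_injective (hv : IsNullFamily v) {g : κ → ι} (hg : Injective g) :
    IsNullFamily (v ∘ g) :=
  ⟨fun i => hv.nonneg (g i),
    fun ε hε => Set.Finite.preimage (f := g) hg.injOn (hv.finite_setOf_lt ε hε)⟩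

theorem supSum_mono [Infinite ι] (hv : IsNullFamily v) : Monotone (supSum v) := fun _ n hmn =>
  supSum_le fun F hF => by
    obtain ⟨G, hFG, hG⟩ := Infinite.exists_superset_card_eq F n (hF ▸ hmn)
    calc ∑ i ∈ F, v i ≤ ∑ i ∈ G, v i :=
          sum_le_sum_of_subset_of_nonneg hFG fun i _ _ => hv.nonneg i
      _ ≤ supSum v n := hG ▸ hv.le_supSum G

theorem supSum_comp_eq [Infinite ι] [Infinite κ] (hv : IsNullFamily v) {g : κ → ι}
    (hg : Injective g) (hsupp : support v ⊆ Set.range g) : supSum (v ∘ g) = supSum v := by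
  funext n
  refine le_antisymm (supSum_le fun F hF => ?_) (supSum_le fun F hF => ?_)
  · calc ∑ i ∈ F, v (g i) = ∑ j ∈ F.map ⟨g, hg⟩, v j := (sum_map F ⟨g, hg⟩ v).symm
      _ ≤ supSum v n := by simpa [hF] using hv.le_supSum (F.map ⟨g, hg⟩)
  · have hpre := (hv.comp_injective hg).le_supSum (F.preimage g hg.injOn)
    rw [comp_def, sum_preimage g F hg.injOn v fun x _ hx =>
      notMem_support.1 fun h => hx (hsupp h)] at hpre
    refine hpre.trans ((hv.comp_injective hg).supSum_mono ?_)
    exact hF ▸ card_le_card_of_injOn g (fun x hx => mem_preimage.1 hx) hg.injOn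

theorem supSum_const_mul [Infinite ι] (hv : IsNullFamily v) {t : ℝ} (ht : 0 ≤ t) (n : ℕ) :
    supSum (fun i => t * v i) n = t * supSum v n := by
  have himage : (fun F : Finset ι => ∑ i ∈ F, t * v i) '' {F | F.card = n} =
      (t * ·) '' ((fun F : Finset ι => ∑ i ∈ F, v i) '' {F | F.card = n}) := by
    rw [← Set.image_comp]
    simp only [comp_def, mul_sum]
  obtain ⟨F, hF⟩ := Infinite.exists_subset_card_eq ι n
  rw [supSum, supSum, himage]
  exact (Monotone.map_csSup_of_continuousAt (continuousAt_id.const_mul t)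
    (fun x y hxy => mul_le_mul_of_nonneg_left hxy ht) (Set.Nonempty.image _ ⟨F, hF⟩)
    (hv.bddAbove_sums n)).symm

theorem decRearr_const_mul [Infinite ι] (hv : IsNullFamily v) {t : ℝ} (ht : 0 ≤ t) (n : ℕ) :
    decRearr (fun i => t * v i) n = t * decRearr v n := by
  rw [decRearr, decRearr, hv.supSum_const_mul ht, hv.supSum_const_mul ht, mul_sub]

end IsNullFamily

end SupSum

namespace IsNullFamily

variable {ι : Type*} [Preorder ι] [WellFoundedLT ι] [Infinite ι] {v : ι → ℝ}

/-- Ties between maximisers are broken by taking a `<`-minimal one; `card_Iio_greedy_le` rests on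
this. -/
theorem exists_greedy_pick (hv : IsNullFamily v) (A : Finset ι) :
    ∃ x ∉ A, (∀ y ∉ A, v y ≤ v x) ∧ ∀ y ∉ A, y < x → v y < v x := by
  classical
  have hmax : ∃ x ∉ A, ∀ y ∉ A, v y ≤ v x := by
    by_cases hpos : ∃ y ∉ A, 0 < v y
    · obtain ⟨y₀, hy₀A, hy₀⟩ := hpos
      set S := (hv.finite_setOf_lt _ (half_pos hy₀)).toFinset.filter (· ∉ A)
      have hy₀S : y₀ ∈ S := by simp [S, hy₀A, half_lt_self hy₀]
      obtain ⟨x, hxS, hx⟩ := S.exists_max_image v ⟨y₀, hy₀S⟩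
      refine ⟨x, (Finset.mem_filter.1 hxS).2, fun y hy => ?_⟩
      by_cases hyS : y ∈ S
      · exact hx y hyS
      · have : v y ≤ v y₀ / 2 := by simpa [S, hy] using hyS
        linarith [hx y₀ hy₀S]
    · push Not at hpos
      obtain ⟨x, hx⟩ := A.exists_notMem
      exact ⟨x, hx, fun y hy => (hpos y hy).trans (hv.nonneg x)⟩
  obtain ⟨x₀, hx₀A, hx₀⟩ := hmax
  obtain ⟨x, ⟨hxA, hx⟩, hmin⟩ :=
    wellFounded_lt.has_min {x | x ∉ A ∧ ∀ y ∉ A, v y ≤ v x} ⟨x₀, hx₀A, hx₀⟩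
  exact ⟨x, hxA, hx, fun y hyA hyx =>
    (hx y hyA).lt_of_ne fun hxy => hmin y ⟨hyA, fun z hz => hxy ▸ hx z hz⟩ hyx⟩

def greedySet (hv : IsNullFamily v) : ℕ → Finset ι
  | 0 => ∅
  | n + 1 => (hv.greedySet n).cons (hv.exists_greedy_pick (hv.greedySet n)).choose
      (hv.exists_greedy_pick (hv.greedySet n)).choose_spec.1

def greedy (hv : IsNullFamily v) (n : ℕ) : ι := (hv.exists_greedy_pick (hv.greedySet n)).choose

theorem greedy_notMem (hv : IsNullFamily v) (n : ℕ) : hv.greedy n ∉ hv.greedySet n :=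
  (hv.exists_greedy_pick (hv.greedySet n)).choose_spec.1

theorem le_greedy (hv : IsNullFamily v) {y : ι} {n : ℕ} (hy : y ∉ hv.greedySet n) :
    v y ≤ v (hv.greedy n) :=
  (hv.exists_greedy_pick (hv.greedySet n)).choose_spec.2.1 y hy

theorem lt_greedy (hv : IsNullFamily v) {y : ι} {n : ℕ} (hy : y ∉ hv.greedySet n)
    (hlt : y < hv.greedy n) : v y < v (hv.greedy n) :=
  (hv.exists_greedy_pick (hv.greedySet n)).choose_spec.2.2 y hy hlt

theorem mem_greedySet (hv : IsNullFamily v) {x : ι} {n : ℕ} :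
    x ∈ hv.greedySet n ↔ ∃ k < n, hv.greedy k = x := by
  induction n with
  | zero => simp [greedySet]
  | succ n ih =>
    simp only [greedySet, Finset.mem_cons, ih]
    constructor
    · rintro (rfl | ⟨k, hk, rfl⟩)
      exacts [⟨n, n.lt_succ_self, rfl⟩, ⟨k, hk.trans n.lt_succ_self, rfl⟩]
    · rintro ⟨k, hk, rfl⟩
      rcases (Nat.lt_succ_iff.1 hk).lt_or_eq with hk | rfl
      exacts [Or.inr ⟨k, hk, rfl⟩, Or.inl rfl]

theorem card_greedySet (hv : IsNullFamily v) (n : ℕ) : (hv.greedySet n).card = n := by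
  induction n with
  | zero => rfl
  | succ n ih => simp [greedySet, ih]

theorem greedy_injective (hv : IsNullFamily v) : Injective hv.greedy := by
  have key : ∀ {k m}, k < m → hv.greedy k ≠ hv.greedy m := fun hkm heq =>
    hv.greedy_notMem _ (hv.mem_greedySet.2 ⟨_, hkm, heq⟩)
  intro k m h
  rcases lt_trichotomy k m with hkm | rfl | hmk
  exacts [(key hkm h).elim, rfl, (key hmk h.symm).elim]

theorem antitone_greedy (hv : IsNullFamily v) : Antitone (v ∘ hv.greedy) :=
  antitone_nat_of_succ_le fun n => hv.le_greedy fun h =>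
    hv.greedy_notMem (n + 1) (by simp [greedySet, h])

theorem supSum_eq_sum_greedy (hv : IsNullFamily v) (n : ℕ) :
    supSum v n = ∑ k ∈ range n, v (hv.greedy k) := by
  classical
  refine le_antisymm (supSum_le fun F hF => ?_) ?_
  · induction n generalizing F with
    | zero => simp [Finset.card_eq_zero.1 hF]
    | succ n ih =>
      obtain ⟨x, hxF, hx⟩ : ∃ x ∈ F, x ∉ hv.greedySet n :=
        Finset.exists_mem_notMem_of_card_lt_card (by rw [hF, hv.card_greedySet]; omega)
      rw [← Finset.add_sum_erase _ _ hxF, sum_range_succ, add_comm]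
      exact add_le_add (ih _ (by rw [Finset.card_erase_of_mem hxF, hF]; rfl)) (hv.le_greedy hx)
  · have himage : hv.greedySet n = (range n).image hv.greedy := by
      ext x
      simp [hv.mem_greedySet]
    have := hv.le_supSum (hv.greedySet n)
    rwa [hv.card_greedySet, himage, sum_image hv.greedy_injective.injOn] at this

theorem decRearr_eq (hv : IsNullFamily v) (n : ℕ) : decRearr v n = v (hv.greedy n) := by
  rw [decRearr, hv.supSum_eq_sum_greedy, hv.supSum_eq_sum_greedy, sum_range_succ]
  ring

theorem decRearr_nonneg (hv : IsNullFamily v) (n : ℕ) : 0 ≤ decRearr v n :=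
  hv.decRearr_eq n ▸ hv.nonneg _

theorem antitone_decRearr (hv : IsNullFamily v) : Antitone (decRearr v) := by
  rw [funext hv.decRearr_eq]
  exact hv.antitone_greedy

theorem le_decRearr_of_notMem (hv : IsNullFamily v) {y : ι} {n : ℕ} (hy : y ∉ hv.greedySet n) :
    v y ≤ decRearr v n :=
  hv.decRearr_eq n ▸ hv.le_greedy hy

theorem exists_le_decRearr (hv : IsNullFamily v) {F : Finset ι} {k : ℕ} (hF : k < F.card) :
    ∃ x ∈ F, v x ≤ decRearr v k := by
  obtain ⟨x, hxF, hx⟩ : ∃ x ∈ F, x ∉ hv.greedySet k :=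
    Finset.exists_mem_notMem_of_card_lt_card (by rwa [hv.card_greedySet])
  exact ⟨x, hxF, hv.le_decRearr_of_notMem hx⟩

theorem decRearr_le_of_card (hv : IsNullFamily v) {t : ℝ} {S : Finset ι}
    (hS : ∀ i, t < v i → i ∈ S) {k : ℕ} (hk : S.card ≤ k) : decRearr v k ≤ t := by
  by_contra! h
  have hsub : hv.greedySet (k + 1) ⊆ S := fun x hx => by
    obtain ⟨m, hm, rfl⟩ := hv.mem_greedySet.1 hx
    refine hS _ (h.trans_le ?_)
    rw [hv.decRearr_eq]
    exact hv.antitone_greedy (Nat.lt_succ_iff.1 hm)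
  have := Finset.card_le_card hsub
  rw [hv.card_greedySet] at this
  omega

theorem tendsto_decRearr (hv : IsNullFamily v) : Tendsto (decRearr v) atTop (𝓝 0) := by
  refine tendsto_order.2 ⟨fun a ha => Eventually.of_forall fun n =>
    ha.trans_le (hv.decRearr_nonneg n), fun ε hε => ?_⟩
  set S := (hv.finite_setOf_lt _ (half_pos hε)).toFinset
  filter_upwards [eventually_ge_atTop S.card] with n hn
  exact (hv.decRearr_le_of_card (fun i hi => by simpa [S] using hi) hn).trans_lt
    (half_lt_self hε)

theorem support_subset_range_greedy (hv : IsNullFamily v) : support v ⊆ Set.range hv.greedy :=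
    fun i hi => by
  have hpos : 0 < v i := (hv.nonneg i).lt_of_ne' hi
  obtain ⟨n, hn⟩ := (hv.tendsto_decRearr.eventually (gt_mem_nhds hpos)).exists
  by_contra hi'
  refine (hv.le_decRearr_of_notMem fun hmem => hi' ?_).not_gt hn
  obtain ⟨k, -, rfl⟩ := hv.mem_greedySet.1 hmem
  exact ⟨k, rfl⟩

theorem card_Iio_greedy_le [LocallyFiniteOrderBot ι] (hv : IsNullFamily v) (hanti : Antitone v)
    (n : ℕ) : (Finset.Iio (hv.greedy n)).card ≤ n := by
  refine (Finset.card_le_card fun y hy => ?_).trans (hv.card_greedySet n).le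
  by_contra hy'
  exact (hv.lt_greedy hy' (Finset.mem_Iio.1 hy)).not_ge (hanti (Finset.mem_Iio.1 hy).le)

end IsNullFamily

theorem IsNullFamily.decRearr_eq_self {f : ℕ → ℝ} (hf : IsNullFamily f) (hanti : Antitone f) :
    decRearr f = f := by
  funext k
  refine le_antisymm (hf.decRearr_le_of_card (S := range k) (fun i hi => ?_) (card_range k).le) ?_
  · exact mem_range.2 (lt_of_not_ge fun h => (hanti h).not_gt hi)
  · obtain ⟨x, hx, hle⟩ := hf.exists_le_decRearr (F := range (k + 1)) (k := k) (by simp)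
    exact (hanti (mem_range_succ_iff.1 hx)).trans hle

theorem isNullFamily_of_tendsto {f : ℕ → ℝ} (h0 : ∀ n, 0 ≤ f n)
    (hf : Tendsto f atTop (𝓝 0)) : IsNullFamily f := by
  refine ⟨h0, fun ε hε => ?_⟩
  have hev : ∀ᶠ n in cofinite, f n < ε := Nat.cofinite_eq_atTop ▸ hf.eventually (gt_mem_nhds hε)
  exact (eventually_cofinite.1 hev).subset fun n hn => not_lt.2 (le_of_lt hn)

section Rearrangement

variable {α β : ℕ → ℂ}

theorem isNullFamily_norm (hα : α ∈ c0) : IsNullFamily (‖α ·‖) :=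
  isNullFamily_of_tendsto (fun _ => norm_nonneg _) (tendsto_zero_iff_norm_tendsto_zero.1 hα)

theorem rearr_eq_decRearr (α : ℕ → ℂ) : rearr α = decRearr (‖α ·‖) := rfl

theorem rearr_nonneg (hα : α ∈ c0) (n : ℕ) : 0 ≤ rearr α n :=
  (isNullFamily_norm hα).decRearr_nonneg n

theorem antitone_rearr (hα : α ∈ c0) : Antitone (rearr α) :=
  (isNullFamily_norm hα).antitone_decRearr

theorem tendsto_rearr (hα : α ∈ c0) : Tendsto (rearr α) atTop (𝓝 0) :=
  (isNullFamily_norm hα).tendsto_decRearr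

theorem isNullFamily_rearr (hα : α ∈ c0) : IsNullFamily (rearr α) :=
  isNullFamily_of_tendsto (rearr_nonneg hα) (tendsto_rearr hα)

theorem toC_mem_c0 {f : ℕ → ℝ} (hf : Tendsto f atTop (𝓝 0)) : toC f ∈ c0 := by
  have h := (Complex.continuous_ofReal.tendsto 0).comp hf
  rwa [Complex.ofReal_zero] at h

theorem norm_toC {f : ℕ → ℝ} (h0 : ∀ n, 0 ≤ f n) (n : ℕ) : ‖toC f n‖ = f n := by
  simp [toC, abs_of_nonneg (h0 n)]

theorem rearr_toC {f : ℕ → ℝ} (h0 : ∀ n, 0 ≤ f n) (hanti : Antitone f)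
    (hf : Tendsto f atTop (𝓝 0)) : rearr (toC f) = f := by
  rw [rearr_eq_decRearr, funext (norm_toC h0)]
  exact (isNullFamily_of_tendsto h0 hf).decRearr_eq_self hanti

theorem tensorSum_eq_supSum_rearr (hα : α ∈ c0) (hβ : β ∈ c0) :
    tensorSum α β = supSum (fun q : ℕ × ℕ => rearr α q.1 * rearr β q.2) := by
  have hA := isNullFamily_norm hα
  have hB := isNullFamily_norm hβ
  have hg : Injective (Prod.map hA.greedy hB.greedy) :=
    hA.greedy_injective.prodMap hB.greedy_injective
  have hsupp : support (fun q : ℕ × ℕ => ‖α q.1‖ * ‖β q.2‖) ⊆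
      Set.range (Prod.map hA.greedy hB.greedy) := fun q hq => by
    rw [Set.range_prodMap]
    exact ⟨hA.support_subset_range_greedy (left_ne_zero_of_mul hq),
      hB.support_subset_range_greedy (right_ne_zero_of_mul hq)⟩
  change supSum _ = _
  rw [← (hA.mul hB).supSum_comp_eq hg hsupp]
  congr 1
  funext q
  simp [rearr_eq_decRearr, hA.decRearr_eq, hB.decRearr_eq]

theorem tensorSeq_eq_decRearr_rearr (hα : α ∈ c0) (hβ : β ∈ c0) :
    tensorSeq α β = decRearr (fun q : ℕ × ℕ => rearr α q.1 * rearr β q.2) := by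
  funext n
  simp only [tensorSeq, decRearr, tensorSum_eq_supSum_rearr hα hβ]

theorem toC_tensorSeq_mem_c0 (hα : α ∈ c0) (hβ : β ∈ c0) : toC (tensorSeq α β) ∈ c0 := by
  rw [tensorSeq_eq_decRearr_rearr hα hβ]
  exact toC_mem_c0 ((isNullFamily_rearr hα).mul (isNullFamily_rearr hβ)).tendsto_decRearr

theorem rearr_toC_tensorSeq (hα : α ∈ c0) (hβ : β ∈ c0) :
    rearr (toC (tensorSeq α β)) = tensorSeq α β := by
  have hc := (isNullFamily_rearr hα).mul (isNullFamily_rearr hβ)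
  rw [tensorSeq_eq_decRearr_rearr hα hβ]
  exact rearr_toC hc.decRearr_nonneg hc.antitone_decRearr hc.tendsto_decRearr

end Rearrangement

theorem card_Iio_nat_prod (i j : ℕ) : (Finset.Iio (i, j)).card = (i + 1) * (j + 1) - 1 := by
  rw [card_Iio_eq_card_Iic_sub_one, Finset.card_Iic_prod, Nat.card_Iic, Nat.card_Iic]

theorem Real.rpow_add_le_two_rpow_mul {x y p : ℝ} (hx : 0 ≤ x) (hy : 0 ≤ y) (hp : 1 ≤ p) :
    (x + y) ^ p ≤ 2 ^ (p - 1) * (x ^ p + y ^ p) := by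
  lift x to NNReal using hx
  lift y to NNReal using hy
  exact_mod_cast NNReal.rpow_add_le_mul_rpow_add_rpow x y hp

theorem Summable.comp_div_two {g : ℕ → ℝ} (hg : Summable g) : Summable fun j => g (j / 2) :=
  Summable.even_add_odd (by simpa using hg) (by simpa [Nat.mul_add_div] using hg)

section TensorBound

variable {w a b : ℕ → ℝ} {p C : ℝ}

theorem weight_mul_rpow_le (hwa : Antitone w)
    (hsub : ∀ m n : ℕ, w ((m + 1) * (n + 1) - 1) ≤ C * (w m * w n))
    {i j k : ℕ} (hk : (i + 1) * (j + 1) - 1 ≤ k) (ha : 0 ≤ a i) (hb : 0 ≤ b j) :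
    w k * (a i * b j) ^ p ≤ C * ((w i * a i ^ p) * (w j * b j ^ p)) := by
  rw [Real.mul_rpow ha hb]
  calc w k * (a i ^ p * b j ^ p) ≤ C * (w i * w j) * (a i ^ p * b j ^ p) :=
        mul_le_mul_of_nonneg_right ((hwa hk).trans (hsub i j)) (by positivity)
    _ = C * ((w i * a i ^ p) * (w j * b j ^ p)) := by ring

theorem summable_and_tsum_decRearr_mul_le (hw0 : ∀ n, 0 ≤ w n) (hwa : Antitone w) (hC : 0 ≤ C)
    (hsub : ∀ m n : ℕ, w ((m + 1) * (n + 1) - 1) ≤ C * (w m * w n))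
    (ha : IsNullFamily a) (ha' : Antitone a) (hb : IsNullFamily b) (hb' : Antitone b)
    (hsa : Summable fun n => w n * a n ^ p) (hsb : Summable fun n => w n * b n ^ p) :
    Summable (fun k => w k * decRearr (fun q : ℕ × ℕ => a q.1 * b q.2) k ^ p) ∧
      ∑' k, w k * decRearr (fun q : ℕ × ℕ => a q.1 * b q.2) k ^ p ≤
        C * ((∑' n, w n * a n ^ p) * ∑' n, w n * b n ^ p) := by
  have hc := ha.mul hb
  have hc' : Antitone fun q : ℕ × ℕ => a q.1 * b q.2 := fun q q' h =>
    mul_le_mul (ha' h.1) (hb' h.2) (hb.nonneg _) (ha.nonneg _)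
  set F : ℕ × ℕ → ℝ := fun q => (w q.1 * a q.1 ^ p) * (w q.2 * b q.2 ^ p)
  have hA0 : ∀ n, 0 ≤ w n * a n ^ p := fun n =>
    mul_nonneg (hw0 n) (Real.rpow_nonneg (ha.nonneg n) p)
  have hB0 : ∀ n, 0 ≤ w n * b n ^ p := fun n =>
    mul_nonneg (hw0 n) (Real.rpow_nonneg (hb.nonneg n) p)
  have hFs : Summable F := hsa.mul_of_nonneg hsb hA0 hB0
  have hterm : ∀ k, w k * decRearr (fun q : ℕ × ℕ => a q.1 * b q.2) k ^ p ≤ C * F (hc.greedy k) :=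
    fun k => by
      rw [hc.decRearr_eq]
      refine weight_mul_rpow_le hwa hsub ?_ (ha.nonneg _) (hb.nonneg _)
      exact (card_Iio_nat_prod _ _).symm.trans_le (hc.card_Iio_greedy_le hc' k)
  have hs : Summable fun k => C * F (hc.greedy k) :=
    (hFs.comp_injective hc.greedy_injective).mul_left C
  have hsum := hs.of_nonneg_of_le
    (fun k => mul_nonneg (hw0 k) (Real.rpow_nonneg (hc.decRearr_nonneg k) p)) hterm
  refine ⟨hsum, ?_⟩
  calc ∑' k, w k * decRearr (fun q : ℕ × ℕ => a q.1 * b q.2) k ^ p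
      ≤ ∑' k, C * F (hc.greedy k) := hsum.tsum_le_tsum hterm hs
    _ = C * ∑' k, F (hc.greedy k) := tsum_mul_left
    _ ≤ C * ∑' q, F q := mul_le_mul_of_nonneg_left
        (tsum_comp_le_tsum_of_inj hFs (fun q => mul_nonneg (hA0 _) (hB0 _)) hc.greedy_injective) hC
    _ = C * ((∑' n, w n * a n ^ p) * ∑' n, w n * b n ^ p) := by rw [hsa.tsum_mul_tsum hsb hFs]

end TensorBound

section Lorentz

variable {w : ℕ → ℝ} {p C : ℝ} {α β : ℕ → ℂ}

theorem summable_and_tsum_tensorSeq_le (hw0 : ∀ n, 0 ≤ w n) (hwa : Antitone w) (hC : 0 ≤ C)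
    (hsub : ∀ m n : ℕ, w ((m + 1) * (n + 1) - 1) ≤ C * (w m * w n))
    (hα : α ∈ lorentzSpace w p) (hβ : β ∈ lorentzSpace w p) :
    Summable (fun k => w k * rearr (toC (tensorSeq α β)) k ^ p) ∧
      ∑' k, w k * rearr (toC (tensorSeq α β)) k ^ p ≤
        C * ((∑' n, w n * rearr α n ^ p) * ∑' n, w n * rearr β n ^ p) := by
  rw [rearr_toC_tensorSeq hα.1 hβ.1, tensorSeq_eq_decRearr_rearr hα.1 hβ.1]
  exact summable_and_tsum_decRearr_mul_le hw0 hwa hC hsub (isNullFamily_rearr hα.1)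
    (antitone_rearr hα.1) (isNullFamily_rearr hβ.1) (antitone_rearr hβ.1) hα.2 hβ.2

theorem tensorSeq_mem_lorentzSpace (hw0 : ∀ n, 0 ≤ w n) (hwa : Antitone w) (hC : 0 ≤ C)
    (hsub : ∀ m n : ℕ, w ((m + 1) * (n + 1) - 1) ≤ C * (w m * w n))
    (hα : α ∈ lorentzSpace w p) (hβ : β ∈ lorentzSpace w p) :
    toC (tensorSeq α β) ∈ lorentzSpace w p :=
  ⟨toC_tensorSeq_mem_c0 hα.1 hβ.1, (summable_and_tsum_tensorSeq_le hw0 hwa hC hsub hα hβ).1⟩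

theorem lorentzNorm_tensorSeq_le (hw0 : ∀ n, 0 ≤ w n) (hwa : Antitone w) (hp : 0 < p)
    (hC : 0 ≤ C) (hsub : ∀ m n : ℕ, w ((m + 1) * (n + 1) - 1) ≤ C * (w m * w n))
    (hα : α ∈ lorentzSpace w p) (hβ : β ∈ lorentzSpace w p) :
    lorentzNorm w p (toC (tensorSeq α β)) ≤
      C ^ (1 / p) * (lorentzNorm w p α * lorentzNorm w p β) := by
  have hsum_nonneg : ∀ γ : ℕ → ℂ, γ ∈ c0 → 0 ≤ ∑' n, w n * rearr γ n ^ p := fun γ hγ =>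
    tsum_nonneg fun n => mul_nonneg (hw0 n) (Real.rpow_nonneg (rearr_nonneg hγ n) p)
  have hX := hsum_nonneg α hα.1
  have hY := hsum_nonneg β hβ.1
  calc lorentzNorm w p (toC (tensorSeq α β))
      ≤ (C * ((∑' n, w n * rearr α n ^ p) * ∑' n, w n * rearr β n ^ p)) ^ (1 / p) :=
        Real.rpow_le_rpow (hsum_nonneg _ (toC_tensorSeq_mem_c0 hα.1 hβ.1))
          (summable_and_tsum_tensorSeq_le hw0 hwa hC hsub hα hβ).2 (by positivity)
    _ = C ^ (1 / p) * (lorentzNorm w p α * lorentzNorm w p β) := by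
        rw [Real.mul_rpow hC (mul_nonneg hX hY), Real.mul_rpow hX hY, lorentzNorm, lorentzNorm]

theorem rearr_smul (c : ℂ) (hα : α ∈ c0) (n : ℕ) : rearr (c • α) n = ‖c‖ * rearr α n := by
  have hnorm : (‖(c • α) ·‖) = fun i => ‖c‖ * ‖α i‖ := funext fun i => norm_smul c (α i)
  rw [rearr_eq_decRearr, hnorm, (isNullFamily_norm hα).decRearr_const_mul (norm_nonneg c)]
  rfl

theorem add_mem_c0 (hα : α ∈ c0) (hβ : β ∈ c0) : α + β ∈ c0 := by
  have h := hα.add hβ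
  rwa [add_zero] at h

theorem rearr_add_le (hα : α ∈ c0) (hβ : β ∈ c0) (m n : ℕ) :
    rearr (α + β) (m + n) ≤ rearr α m + rearr β n := by
  classical
  have hA := isNullFamily_norm hα
  have hB := isNullFamily_norm hβ
  refine (isNullFamily_norm (add_mem_c0 hα hβ)).decRearr_le_of_card
    (S := hA.greedySet m ∪ hB.greedySet n) (fun i hi => ?_) ?_
  · have htri : ‖α i‖ + ‖β i‖ ≥ ‖(α + β) i‖ := norm_add_le _ _
    by_contra hi'
    rw [mem_union, not_or] at hi'
    have := hA.le_decRearr_of_notMem hi'.1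
    have := hB.le_decRearr_of_notMem hi'.2
    rw [rearr_eq_decRearr, rearr_eq_decRearr] at hi
    linarith
  · exact (card_union_le _ _).trans (by rw [hA.card_greedySet, hB.card_greedySet])

theorem mem_lorentzSpace_of_rearr_le (hw0 : ∀ n, 0 ≤ w n) (hp : 0 ≤ p)
    (hα : α ∈ lorentzSpace w p) (hβ : β ∈ c0) (hle : ∀ n, rearr β n ≤ rearr α n) :
    β ∈ lorentzSpace w p :=
  ⟨hβ, hα.2.of_nonneg_of_le (fun n => mul_nonneg (hw0 n) (Real.rpow_nonneg (rearr_nonneg hβ n) p))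
    fun n => mul_le_mul_of_nonneg_left (Real.rpow_le_rpow (rearr_nonneg hβ n) (hle n) hp) (hw0 n)⟩

theorem smul_mem_lorentzSpace (c : ℂ) (hα : α ∈ lorentzSpace w p) : c • α ∈ lorentzSpace w p := by
  have hc0 := hα.1.const_mul c
  rw [mul_zero] at hc0
  refine ⟨hc0, (hα.2.mul_left (‖c‖ ^ p)).congr fun n => ?_⟩
  rw [rearr_smul c hα.1, Real.mul_rpow (norm_nonneg c) (rearr_nonneg hα.1 n)]
  ring

theorem add_mem_lorentzSpace (hw0 : ∀ n, 0 ≤ w n) (hwa : Antitone w) (hp : 1 ≤ p)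
    (hα : α ∈ lorentzSpace w p) (hβ : β ∈ lorentzSpace w p) : α + β ∈ lorentzSpace w p := by
  have hαβ := add_mem_c0 hα.1 hβ.1
  refine ⟨hαβ, ((hα.2.add hβ.2).mul_left (2 ^ (p - 1))).comp_div_two.of_nonneg_of_le
    (fun j => mul_nonneg (hw0 j) (Real.rpow_nonneg (rearr_nonneg hαβ j) p)) fun j => ?_⟩
  have hrearr : rearr (α + β) j ≤ rearr α (j / 2) + rearr β (j / 2) :=
    (antitone_rearr hαβ (by omega)).trans (rearr_add_le hα.1 hβ.1 _ _)
  calc w j * rearr (α + β) j ^ p ≤ w (j / 2) * (rearr α (j / 2) + rearr β (j / 2)) ^ p :=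
        mul_le_mul (hwa (Nat.div_le_self j 2))
          (Real.rpow_le_rpow (rearr_nonneg hαβ j) hrearr (by linarith))
          (Real.rpow_nonneg (rearr_nonneg hαβ j) p) (hw0 _)
    _ ≤ w (j / 2) * (2 ^ (p - 1) * (rearr α (j / 2) ^ p + rearr β (j / 2) ^ p)) :=
        mul_le_mul_of_nonneg_left (Real.rpow_add_le_two_rpow_mul (rearr_nonneg hα.1 _)
          (rearr_nonneg hβ.1 _) hp) (hw0 _)
    _ = 2 ^ (p - 1) * (w (j / 2) * rearr α (j / 2) ^ p + w (j / 2) * rearr β (j / 2) ^ p) := by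
        ring

theorem single_zero_nonneg (n : ℕ) : 0 ≤ (Pi.single 0 1 : ℕ → ℝ) n := by
  rw [Pi.single_apply]
  split_ifs <;> norm_num

theorem antitone_single_zero : Antitone (Pi.single 0 1 : ℕ → ℝ) := fun m n hmn => by
  rcases n with _ | n
  · obtain rfl : m = 0 := by omega
    rfl
  · rw [Pi.single_eq_of_ne (by omega)]
    exact single_zero_nonneg m

theorem tendsto_single_zero : Tendsto (Pi.single 0 1 : ℕ → ℝ) atTop (𝓝 0) :=
  tendsto_const_nhds.congr' (eventually_atTop.2 ⟨1, fun n hn => by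
    rw [Pi.single_eq_of_ne (show n ≠ 0 by omega)]⟩)

theorem toC_single_mem_lorentzSpace (hp : p ≠ 0) : toC (Pi.single 0 1) ∈ lorentzSpace w p := by
  refine ⟨toC_mem_c0 tendsto_single_zero, ?_⟩
  rw [rearr_toC single_zero_nonneg antitone_single_zero tendsto_single_zero]
  refine summable_of_ne_finset_zero (s := {0}) fun n hn => ?_
  rw [Pi.single_eq_of_ne (by simpa using hn), Real.zero_rpow hp, mul_zero]

theorem isCalkinSpace_lorentzSpace (hw0 : ∀ n, 0 ≤ w n) (hwa : Antitone w) (hp : 1 ≤ p) :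
    IsCalkinSpace (lorentzSpace w p) := by
  refine ⟨fun α hα => hα.1, ?_, fun α hα β hβ => add_mem_lorentzSpace hw0 hwa hp hα hβ,
    fun c α hα => smul_mem_lorentzSpace c hα,
    fun α hα β hβ hle => mem_lorentzSpace_of_rearr_le hw0 (by linarith) hα hβ hle⟩
  simpa using smul_mem_lorentzSpace 0 (toC_single_mem_lorentzSpace (p := p) (by linarith))

theorem tensorSeq_toC_single (hα : α ∈ c0) : tensorSeq α (toC (Pi.single 0 1)) = rearr α := by
  have hδ := isNullFamily_norm (toC_mem_c0 tendsto_single_zero)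
  have hT := (isNullFamily_norm hα).mul hδ
  have hg : Injective fun i : ℕ => (i, 0) := fun i j h => congrArg Prod.fst h
  have hsupp : support (fun q : ℕ × ℕ => ‖α q.1‖ * ‖toC (Pi.single 0 1) q.2‖) ⊆
      Set.range fun i : ℕ => (i, 0) := fun q hq => by
    have hq2 : q.2 = 0 := by
      by_contra h
      exact hq (by simp [norm_toC single_zero_nonneg, Pi.single_eq_of_ne h])
    exact ⟨q.1, Prod.ext rfl hq2.symm⟩
  have key : tensorSum α (toC (Pi.single 0 1)) = rearrSum α := by
    change supSum _ = supSum _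
    rw [← hT.supSum_comp_eq hg hsupp]
    congr 1
    funext i
    simp [norm_toC single_zero_nonneg]
  funext n
  rw [tensorSeq, rearr, key]

theorem isStableCalkin_lorentzSpace (hw0 : ∀ n, 0 ≤ w n) (hwa : Antitone w) (hp : 1 ≤ p)
    (hC : 0 ≤ C) (hsub : ∀ m n : ℕ, w ((m + 1) * (n + 1) - 1) ≤ C * (w m * w n)) :
    IsStableCalkin (lorentzSpace w p) := by
  have hI := isCalkinSpace_lorentzSpace hw0 hwa hp
  refine ⟨hI, Set.Subset.antisymm (fun α hα => hα _ ⟨hI, fun α hα β hβ =>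
    tensorSeq_mem_lorentzSpace hw0 hwa hC hsub hα hβ⟩) fun α hα K ⟨hK, hKt⟩ => ?_⟩
  have hαδ := hKt α hα _ (toC_single_mem_lorentzSpace (by linarith))
  rw [tensorSeq_toC_single hα.1] at hαδ
  refine hK.2.2.2.2 _ hαδ α hα.1 fun n => ?_
  rw [rearr_toC (rearr_nonneg hα.1) (antitone_rearr hα.1) (tendsto_rearr hα.1)]

end Lorentz

/-- Sequences are 0-indexed, so `w (m*n - 1)` with 1-indexed `m, n` reads
`w ((m+1)*(n+1) - 1)`. -/
theorem lorentz_stable_general (w : ℕ → ℝ) (hwa : Antitone w)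
    (hwpos : ∀ n, 0 < w n)
    (p : ℝ) (hp : 1 ≤ p) (C : ℝ) (hC : 0 < C)
    (hsub : ∀ m n : ℕ, w ((m + 1) * (n + 1) - 1) ≤ C * (w m * w n)) :
    (∀ α ∈ lorentzSpace w p, ∀ β ∈ lorentzSpace w p,
      lorentzNorm w p (toC (tensorSeq α β)) ≤
        C ^ (1 / p) * (lorentzNorm w p α * lorentzNorm w p β)) ∧
    IsStableCalkin (lorentzSpace w p) := by
  have hw0 : ∀ n, 0 ≤ w n := fun n => (hwpos n).le
  exact ⟨fun α hα β hβ => lorentzNorm_tensorSeq_le hw0 hwa (by linarith) hC.le hsub hα hβ,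
    isStableCalkin_lorentzSpace hw0 hwa hp hC.le hsub⟩

/-- Let `w` be a weight sequence with `w_{mn} ≤ C wₘ wₙ` and
`1 ≤ p < ∞`.  Then `‖α⊗β‖_{w,p} ≤ C^{1/p} ‖α‖_{w,p} ‖β‖_{w,p}` for `α, β ∈ ℓ_{w,p}`;
in particular `ℓ_{w,p}` is a stable Calkin space.  (Sequences are 0-indexed, so
`w (m*n - 1)` with 1-indexed `m, n` reads `w ((m+1)*(n+1) - 1)`.) -/
theorem lorentz_stable (w : ℕ → ℝ) (hw1 : w 0 = 1) (hwa : Antitone w)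
    (hwpos : ∀ n, 0 < w n)
    (hwc : Filter.Tendsto w Filter.atTop (nhds 0)) (hwns : ¬ Summable w)
    (p : ℝ) (hp : 1 ≤ p) (C : ℝ) (hC : 0 < C)
    (hsub : ∀ m n : ℕ, w ((m + 1) * (n + 1) - 1) ≤ C * (w m * w n)) :
    (∀ α ∈ lorentzSpace w p, ∀ β ∈ lorentzSpace w p,
      lorentzNorm w p (toC (tensorSeq α β)) ≤
        C ^ (1 / p) * (lorentzNorm w p α * lorentzNorm w p β)) ∧
    IsStableCalkin (lorentzSpace w p) :=
  lorentz_stable_general w hwa hwpos p hp C hC hsub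
end
end

section
/- Let 𝒜 be a C*-algebra, 𝒥 ⊆ 𝒜 a closed two-sided ideal, and Φ : 𝒜 → 𝒜 a bounded linear operator with Φ(𝒥) ⊆ 𝒥. Let Φ₀ : 𝒥 → 𝒥 be the restriction of Φ, i.e. Φ₀(x) = Φ(x) for x ∈ 𝒥. Then hₙ(Φ₀) ≤ hₙ(Φ) for every n ≥ 1. -/
open scoped BigOperators

noncomputable section

/-- The `n`-th approximation number of `T` (1-indexed: `approxNum T n = aₙ(T)` is the
infimum of `‖T - F‖` over bounded operators `F` of rank `< n`).  For operators between
Hilbert spaces this equals the `n`-th singular number. -/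
def approxNum {X Y : Type*} [NormedAddCommGroup X] [NormedSpace ℂ X]
    [NormedAddCommGroup Y] [NormedSpace ℂ Y] (T : X →L[ℂ] Y) (n : ℕ) : ℝ :=
  sInf {c | ∃ F : X →L[ℂ] Y, LinearMap.rank (F : X →ₗ[ℂ] Y) < (n : Cardinal) ∧ c = ‖T - F‖}

/-- The `n`-th Kolmogorov number `dₙ(T)` (1-indexed). -/
def kolNum {X Y : Type*} [NormedAddCommGroup X] [NormedSpace ℂ X]
    [NormedAddCommGroup Y] [NormedSpace ℂ Y] (T : X →L[ℂ] Y) (n : ℕ) : ℝ :=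
  sInf {c | ∃ V : Submodule ℂ Y, Module.rank ℂ V < (n : Cardinal) ∧
    c = ⨆ x : {x : X // ‖x‖ ≤ 1}, ⨅ y : V, ‖T x.1 - (y : Y)‖}

/-- The `n`-th Hilbert number `hₙ(T)` (1-indexed): the supremum of `sₙ(A ∘ T ∘ B)` over
all Hilbert spaces `K`, `H'` and all contractions `B : K → X`, `A : Y → H'`. -/
def hilbertNum {X Y : Type u} [NormedAddCommGroup X] [NormedSpace ℂ X]
    [NormedAddCommGroup Y] [NormedSpace ℂ Y] (T : X →L[ℂ] Y) (n : ℕ) : ℝ :=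
  sSup {c | ∃ (K : Type u) (_ : NormedAddCommGroup K) (_ : InnerProductSpace ℂ K)
    (_ : CompleteSpace K) (H' : Type u) (_ : NormedAddCommGroup H')
    (_ : InnerProductSpace ℂ H') (_ : CompleteSpace H')
    (B : K →L[ℂ] X) (A : Y →L[ℂ] H'), ‖B‖ ≤ 1 ∧ ‖A‖ ≤ 1 ∧
    c = approxNum ((A.comp T).comp B) n}

/-- The sequence of singular numbers of an operator, 0-indexed:
`sSeq T n = s_{n+1}(T) = a_{n+1}(T)`. -/
def sSeq {X Y : Type*} [NormedAddCommGroup X] [NormedSpace ℂ X]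
    [NormedAddCommGroup Y] [NormedSpace ℂ Y] (T : X →L[ℂ] Y) : ℕ → ℝ :=
  fun n => approxNum T (n + 1)

/-- The multiplication operator `M_{a,b} : x ↦ a * x * b` on a normed algebra. -/
def Mop {A : Type*} [NonUnitalNormedRing A] [NormedSpace ℂ A] [IsScalarTower ℂ A A]
    [SMulCommClass ℂ A A] (a b : A) : A →L[ℂ] A :=
  (ContinuousLinearMap.mul ℂ A a).comp ((ContinuousLinearMap.mul ℂ A).flip b)

/-!
Let `R : 𝒥 → ℋ` be a contraction into a Hilbert space. Every finite subset of the right ideal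
`𝒥` has an approximate left unit `e ∈ 𝒥` of norm `≤ 1`: for `a = ∑ xᵢ xᵢ*` take
`e = a (δ + a)⁻¹`. Along an ultrafilter refining these approximate units, the contractions
`x ↦ R (e x)` on all of `𝒜` have a weak-operator limit `T`, a contraction that agrees with `R`
on `𝒥`. Hence every `R ∘ Φ₀ ∘ B` occurring in `hₙ(Φ₀)` equals `T ∘ Φ ∘ (ι ∘ B)` with `ι : 𝒥 → 𝒜`
the inclusion, and so occurs in `hₙ(Φ)`.
-/

open Filter Topology

universe u

lemma CStarAlgebra.exists_norm_mul_le_one_and_norm_mul_mul_sub_le {B : Type*} [CStarAlgebra B]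
    [PartialOrder B] [StarOrderedRing B] {a : B} (ha : 0 ≤ a) {ε : ℝ} (hε : 0 < ε) :
    ∃ b : B, ‖a * b‖ ≤ 1 ∧ ∀ x : B, x * star x ≤ a → ‖a * b * x - x‖ ≤ ε := by
  -- `c := 1 - a b = δ (δ + a)⁻¹` and `‖a b x - x‖² = ‖c x x* c‖ ≤ ‖c a c‖ ≤ δ`.
  set δ := ε ^ 2
  have hδ : 0 < δ := by positivity
  have hspec : ∀ t ∈ spectrum ℝ a, 0 ≤ t := fun t ht => spectrum_nonneg_of_nonneg ha ht
  have hpos : ∀ t ∈ spectrum ℝ a, 0 < δ + t := fun t ht => by positivity [hspec t ht]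
  have hinv : ContinuousOn (fun t : ℝ => (δ + t)⁻¹) (spectrum ℝ a) :=
    ContinuousOn.inv₀ (by fun_prop) fun t ht => (hpos t ht).ne'
  have hab : a * cfc (fun t : ℝ => (δ + t)⁻¹) a = cfc (fun t : ℝ => t * (δ + t)⁻¹) a := by
    rw [cfc_mul (fun t : ℝ => t) _ a, cfc_id' ℝ a]
  refine ⟨cfc (fun t : ℝ => (δ + t)⁻¹) a, ?_, fun x hx => ?_⟩
  · rw [hab]
    refine norm_cfc_le zero_le_one fun t ht => ?_
    rw [Real.norm_of_nonneg (by positivity [hspec t ht]), ← div_eq_mul_inv, div_le_one (hpos t ht)]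
    linarith
  have hd : ContinuousOn (fun t : ℝ => δ * (δ + t)⁻¹) (spectrum ℝ a) := continuousOn_const.mul hinv
  set c := cfc (fun t : ℝ => δ * (δ + t)⁻¹) a
  have hc : a * cfc (fun t : ℝ => (δ + t)⁻¹) a * x - x = -(c * x) := by
    have : a * cfc (fun t : ℝ => (δ + t)⁻¹) a - 1 = -c := by
      rw [hab, ← cfc_const_one ℝ a, ← cfc_sub .., ← cfc_neg]
      refine cfc_congr fun t ht => ?_
      field_simp [(hpos t ht).ne']
      ring
    rw [← neg_mul, ← this, sub_mul, one_mul]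
  have hcc : c * a * star c = cfc (fun t : ℝ => δ * (δ + t)⁻¹ * t * (δ * (δ + t)⁻¹)) a := by
    rw [(cfc_predicate _ a : IsSelfAdjoint c).star_eq,
      cfc_mul (fun t => δ * (δ + t)⁻¹ * t) _ a (hd.mul (continuousOn_id' _)) hd,
      cfc_mul _ (fun t => t) a hd (continuousOn_id' _), cfc_id' ℝ a]
  have hca : ‖c * a * star c‖ ≤ δ := by
    rw [hcc]
    refine norm_cfc_le hδ.le fun t ht => ?_
    have h1 : δ * (δ + t)⁻¹ ≤ 1 := by
      rw [← div_eq_mul_inv, div_le_one (hpos t ht)]; linarith [hspec t ht]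
    have h2 : t * (δ + t)⁻¹ ≤ 1 := by
      rw [← div_eq_mul_inv, div_le_one (hpos t ht)]; linarith
    rw [Real.norm_of_nonneg (by positivity [hspec t ht])]
    calc δ * (δ + t)⁻¹ * t * (δ * (δ + t)⁻¹) = δ * (δ * (δ + t)⁻¹) * (t * (δ + t)⁻¹) := by ring
      _ ≤ δ * 1 * 1 := by gcongr; positivity [hspec t ht]
      _ = δ := by ring
  have : ‖c * x‖ ^ 2 ≤ ε ^ 2 :=
    calc ‖c * x‖ ^ 2 = ‖c * (x * star x) * star c‖ := by
          rw [sq, ← CStarRing.norm_self_mul_star, star_mul, mul_assoc, mul_assoc, mul_assoc]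
      _ ≤ ‖c * a * star c‖ := CStarAlgebra.norm_le_norm_of_nonneg_of_le
          (star_right_conjugate_nonneg (mul_star_self_nonneg x) c)
          (star_right_conjugate_le_conjugate hx c)
      _ ≤ ε ^ 2 := hca
  rw [hc, norm_neg]
  exact (pow_le_pow_iff_left₀ (norm_nonneg _) hε.le two_ne_zero).1 this

open scoped CStarAlgebra in
lemma exists_mem_norm_le_one_forall_norm_mul_sub_le {A : Type*} [NonUnitalCStarAlgebra A]
    (J : Submodule ℂ A) (hJ : ∀ a : A, ∀ x ∈ J, x * a ∈ J) (s : Finset J) {ε : ℝ} (hε : 0 < ε) :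
    ∃ e ∈ J, ‖e‖ ≤ 1 ∧ ∀ x ∈ s, ‖e * x - x‖ ≤ ε := by
  let : PartialOrder A⁺¹ := CStarAlgebra.spectralOrder _
  have : StarOrderedRing A⁺¹ := CStarAlgebra.spectralOrderedRing _
  set a : A := ∑ x ∈ s, (x : A) * star (x : A)
  have haJ : a ∈ J := J.sum_mem fun x _ => hJ _ x x.2
  have hterm : ∀ x ∈ s, 0 ≤ ((x : A) : A⁺¹) * star ((x : A) : A⁺¹) :=
    fun x _ => mul_star_self_nonneg _
  have ha : (a : A⁺¹) = ∑ x ∈ s, ((x : A) : A⁺¹) * star ((x : A) : A⁺¹) :=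
    (map_sum (Unitization.inrNonUnitalStarAlgHom ℂ A) _ s).trans (by simp)
  obtain ⟨b, hb, hbx⟩ := CStarAlgebra.exists_norm_mul_le_one_and_norm_mul_mul_sub_le
    (ha ▸ Finset.sum_nonneg hterm : 0 ≤ (a : A⁺¹)) hε
  -- `a b` lies in `𝒥` (as an element of `𝒜`) because `𝒥` is a right ideal.
  have he : (a : A⁺¹) * b = ((b.fst • a + a * b.snd : A) : A⁺¹) := by
    ext <;> simp
  refine ⟨b.fst • a + a * b.snd, J.add_mem (J.smul_mem _ haJ) (hJ _ a haJ), ?_, fun x hx => ?_⟩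
  · rwa [← Unitization.norm_inr (𝕜 := ℂ), ← he]
  · have := hbx x (ha ▸ Finset.single_le_sum hterm hx)
    rwa [he, ← Unitization.inr_mul, ← Unitization.inr_sub, Unitization.norm_inr] at this

lemma exists_filter_norm_le_one_tendsto_mul {A : Type*} [NonUnitalCStarAlgebra A]
    (J : Submodule ℂ A) (hJ : ∀ a : A, ∀ x ∈ J, x * a ∈ J) :
    ∃ l : Filter J, l.NeBot ∧ (∀ᶠ e in l, ‖e‖ ≤ 1) ∧
      ∀ x : J, Tendsto (fun e : J => (e : A) * x) l (𝓝 x) := by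
  classical
  choose e heJ he1 he using fun i : Finset J × ℕ =>
    exists_mem_norm_le_one_forall_norm_mul_sub_le J hJ i.1 (Nat.one_div_pos_of_nat (n := i.2))
  refine ⟨map (fun i => ⟨e i, heJ i⟩) atTop, inferInstance, eventually_map.2 (.of_forall he1),
    fun x => ?_⟩
  refine Metric.tendsto_nhds.2 fun ε hε => ?_
  obtain ⟨n, hn⟩ := exists_nat_one_div_lt hε
  refine eventually_map.2 (eventually_atTop.2 ⟨({x}, n), fun i hi => ?_⟩)
  calc dist (e i * x) x ≤ 1 / (i.2 + 1) := by
        rw [dist_eq_norm]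
        exact he i x (hi.1 (Finset.mem_singleton_self x))
    _ ≤ 1 / (n + 1) := by gcongr; exact_mod_cast hi.2
    _ < ε := hn

open InnerProductSpace in
theorem ContinuousLinearMap.exists_forall_tendsto_inner {𝕜 ι E H : Type*} [RCLike 𝕜]
    [NormedAddCommGroup E] [NormedSpace 𝕜 E] [NormedAddCommGroup H] [InnerProductSpace 𝕜 H]
    [CompleteSpace H] (U : Ultrafilter ι) (T : ι → E →L[𝕜] H) {C : ℝ}
    (hT : ∀ᶠ i in U, ‖T i‖ ≤ C) :
    ∃ S : E →L[𝕜] H, ‖S‖ ≤ C ∧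
      ∀ x y, Tendsto (fun i => inner 𝕜 (T i x) y) U (𝓝 (inner 𝕜 (S x) y)) := by
  have hC : 0 ≤ C := let ⟨i, hi⟩ := hT.exists; (norm_nonneg _).trans hi
  have hlim : ∀ x y, ∃ z : 𝕜, ‖z‖ ≤ C * ‖x‖ * ‖y‖ ∧
      Tendsto (fun i => inner 𝕜 (T i x) y) U (𝓝 z) := by
    intro x y
    obtain ⟨z, hz, hUz⟩ := (isCompact_closedBall (0 : 𝕜) (C * ‖x‖ * ‖y‖)).ultrafilter_le_nhds
      (U.map fun i => inner 𝕜 (T i x) y) <| tendsto_principal.2 <| hT.mono fun i hi => by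
        rw [mem_closedBall_zero_iff]
        calc ‖inner 𝕜 (T i x) y‖ ≤ ‖T i x‖ * ‖y‖ := norm_inner_le_norm _ _
          _ ≤ C * ‖x‖ * ‖y‖ := by gcongr; exact (T i).le_of_opNorm_le hi x
    exact ⟨z, mem_closedBall_zero_iff.1 hz, hUz⟩
  choose φ hφC hφ using hlim
  let ψ : E → StrongDual 𝕜 H := fun x =>
    (linearMapOfTendsto (φ x) (fun i => (innerSL 𝕜 (T i x)).toLinearMap)
      (tendsto_pi_nhds.2 (hφ x))).mkContinuous (C * ‖x‖) (hφC x)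
  have hS : ∀ x y, inner 𝕜 ((toDual 𝕜 H).symm (ψ x)) y = φ x y := fun x y => toDual_symm_apply
  let S : E →ₗ[𝕜] H :=
    { toFun := fun x => (toDual 𝕜 H).symm (ψ x)
      map_add' := fun x x' => ext_inner_right 𝕜 fun y => by
        rw [inner_add_left, hS, hS, hS]
        exact tendsto_nhds_unique (hφ _ y)
          (by simpa [inner_add_left] using (hφ x y).add (hφ x' y))
      map_smul' := fun c x => ext_inner_right 𝕜 fun y => by
        rw [RingHom.id_apply, inner_smul_left, hS, hS]
        exact tendsto_nhds_unique (hφ _ y)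
          (by simpa [inner_smul_left] using (hφ x y).const_mul (starRingEnd 𝕜 c)) }
  refine ⟨S.mkContinuous C fun x => ?_, LinearMap.mkContinuous_norm_le _ hC _,
    fun x y => hS x y ▸ hφ x y⟩
  rw [LinearMap.coe_mk, AddHom.coe_mk, LinearIsometryEquiv.norm_map]
  exact LinearMap.mkContinuous_norm_le _ (by positivity) _

theorem exists_norm_le_comp_subtypeL_eq_of_mul_mem {A H : Type*} [NonUnitalCStarAlgebra A]
    [NormedAddCommGroup H] [InnerProductSpace ℂ H] [CompleteSpace H]
    (J : Submodule ℂ A) (hJ : ∀ a : A, ∀ x ∈ J, x * a ∈ J) (R : J →L[ℂ] H) :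
    ∃ T : A →L[ℂ] H, ‖T‖ ≤ ‖R‖ ∧ T.comp J.subtypeL = R := by
  obtain ⟨l, hl, hl1, hlim⟩ := exists_filter_norm_le_one_tendsto_mul J hJ
  let L : J → A →L[ℂ] J := fun e =>
    (ContinuousLinearMap.mul ℂ A e).codRestrict J fun a => hJ a e e.2
  have hL : ∀ e : J, ‖e‖ ≤ 1 → ‖R.comp (L e)‖ ≤ ‖R‖ := fun e he =>
    (R.opNorm_comp_le _).trans <| mul_le_of_le_one_right (norm_nonneg _) <|
      (L e).opNorm_le_bound zero_le_one fun a =>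
        (norm_mul_le (e : A) a).trans (mul_le_mul_of_nonneg_right he (norm_nonneg a))
  obtain ⟨T, hT, hTlim⟩ := ContinuousLinearMap.exists_forall_tendsto_inner (Ultrafilter.of l)
    (fun e => R.comp (L e)) ((Ultrafilter.of_le l) (hl1.mono hL))
  refine ⟨T, hT, ContinuousLinearMap.ext fun x => ext_inner_right ℂ fun y => ?_⟩
  refine tendsto_nhds_unique (hTlim x y) (Tendsto.mono_left ?_ (Ultrafilter.of_le l))
  have : Tendsto (fun e => L e x) l (𝓝 x) := tendsto_subtype_rng.2 (hlim x)
  exact ((R.continuous.tendsto x).comp this).inner tendsto_const_nhds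

section HilbertNumbers

variable {X Y : Type*} [NormedAddCommGroup X] [NormedSpace ℂ X]
  [NormedAddCommGroup Y] [NormedSpace ℂ Y]

lemma approxNum_nonneg (T : X →L[ℂ] Y) (n : ℕ) : 0 ≤ approxNum T n :=
  Real.sInf_nonneg <| by rintro c ⟨F, -, rfl⟩; exact norm_nonneg _

lemma approxNum_le_norm (T : X →L[ℂ] Y) (n : ℕ) : approxNum T n ≤ ‖T‖ := by
  rcases Nat.eq_zero_or_pos n with rfl | hn
  · simp [approxNum]
  · refine csInf_le ⟨0, by rintro c ⟨F, -, rfl⟩; exact norm_nonneg _⟩ ⟨0, ?_, by simp⟩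
    simpa using hn

lemma hilbertNum_nonneg {X Y : Type u} [NormedAddCommGroup X] [NormedSpace ℂ X]
    [NormedAddCommGroup Y] [NormedSpace ℂ Y] (T : X →L[ℂ] Y) (n : ℕ) : 0 ≤ hilbertNum T n :=
  Real.sSup_nonneg <| by
    rintro c ⟨K, _, _, _, H, _, _, _, B, A, -, -, rfl⟩
    exact approxNum_nonneg _ n

lemma norm_comp_comp_le_of_norm_le_one {Z W : Type*} [NormedAddCommGroup Z] [NormedSpace ℂ Z]
    [NormedAddCommGroup W] [NormedSpace ℂ W] (T : X →L[ℂ] Y) {B : Z →L[ℂ] X} {A : Y →L[ℂ] W}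
    (hB : ‖B‖ ≤ 1) (hA : ‖A‖ ≤ 1) : ‖(A.comp T).comp B‖ ≤ ‖T‖ :=
  calc ‖(A.comp T).comp B‖ ≤ ‖A‖ * ‖T‖ * ‖B‖ :=
        (ContinuousLinearMap.opNorm_comp_le _ _).trans
          (by gcongr; exact ContinuousLinearMap.opNorm_comp_le _ _)
    _ ≤ 1 * ‖T‖ * 1 := by gcongr
    _ = ‖T‖ := by ring

end HilbertNumbers

theorem hilbertNum_le_of_forall_exists_comp_eq {X Y X' Y' : Type u}
    [NormedAddCommGroup X] [NormedSpace ℂ X] [NormedAddCommGroup Y] [NormedSpace ℂ Y]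
    [NormedAddCommGroup X'] [NormedSpace ℂ X'] [NormedAddCommGroup Y'] [NormedSpace ℂ Y']
    (T : X →L[ℂ] Y) (S : X' →L[ℂ] Y') (n : ℕ)
    (h : ∀ (K : Type u) [NormedAddCommGroup K] [InnerProductSpace ℂ K] [CompleteSpace K]
      (H : Type u) [NormedAddCommGroup H] [InnerProductSpace ℂ H] [CompleteSpace H]
      (B : K →L[ℂ] X) (A : Y →L[ℂ] H), ‖B‖ ≤ 1 → ‖A‖ ≤ 1 →
        ∃ (B' : K →L[ℂ] X') (A' : Y' →L[ℂ] H), ‖B'‖ ≤ 1 ∧ ‖A'‖ ≤ 1 ∧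
          (A'.comp S).comp B' = (A.comp T).comp B) :
    hilbertNum T n ≤ hilbertNum S n := by
  refine Real.sSup_le ?_ (hilbertNum_nonneg S n)
  rintro c ⟨K, _, _, _, H, _, _, _, B, A, hB, hA, rfl⟩
  obtain ⟨B', A', hB', hA', hcomp⟩ := h K H B A hB hA
  refine le_csSup ⟨‖S‖, ?_⟩ ⟨K, inferInstance, inferInstance, inferInstance,
    H, inferInstance, inferInstance, inferInstance, B', A', hB', hA', by rw [hcomp]⟩
  rintro c ⟨K, _, _, _, H, _, _, _, B, A, hB, hA, rfl⟩
  exact (approxNum_le_norm _ n).trans (norm_comp_comp_le_of_norm_le_one S hB hA)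

theorem hilbertNum_restrict_le_general {A : Type u} [NonUnitalNormedRing A] [StarRing A]
    [CStarRing A] [NormedSpace ℂ A] [IsScalarTower ℂ A A] [SMulCommClass ℂ A A]
    [StarModule ℂ A] [CompleteSpace A]
    (J : Submodule ℂ A) (hJr : ∀ a : A, ∀ x ∈ J, x * a ∈ J)
    (Φ : A →L[ℂ] A)
    (Φ₀ : J →L[ℂ] J) (hΦ₀ : ∀ x : J, (Φ₀ x : A) = Φ (x : A)) :
    ∀ n : ℕ, 1 ≤ n → hilbertNum Φ₀ n ≤ hilbertNum Φ n := by
  intro n _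
  let : NonUnitalCStarAlgebra A := {}
  refine hilbertNum_le_of_forall_exists_comp_eq Φ₀ Φ n fun K _ _ _ H _ _ _ B C hB hC => ?_
  obtain ⟨T, hT, hTC⟩ := exists_norm_le_comp_subtypeL_eq_of_mul_mem J hJr C
  refine ⟨J.subtypeL.comp B, T, ?_, hT.trans hC, ?_⟩
  · exact (ContinuousLinearMap.opNorm_comp_le _ _).trans
      (mul_le_one₀ J.norm_subtypeL_le (norm_nonneg _) hB)
  · ext k
    simp [← hTC, hΦ₀]

/-- Let `𝒜` be a C*-algebra, `𝒥 ⊆ 𝒜` a closed two-sided ideal and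
`Φ : 𝒜 → 𝒜` a bounded operator with `Φ(𝒥) ⊆ 𝒥`; let `Φ₀ : 𝒥 → 𝒥` be the restriction
of `Φ`.  Then `hₙ(Φ₀) ≤ hₙ(Φ)` for every `n ≥ 1`. -/
theorem hilbertNum_restrict_le {A : Type u} [NonUnitalNormedRing A] [StarRing A]
    [CStarRing A] [NormedSpace ℂ A] [IsScalarTower ℂ A A] [SMulCommClass ℂ A A]
    [StarModule ℂ A] [CompleteSpace A]
    (J : Submodule ℂ A) (hJclosed : IsClosed (J : Set A))
    (hJl : ∀ a : A, ∀ x ∈ J, a * x ∈ J) (hJr : ∀ a : A, ∀ x ∈ J, x * a ∈ J)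
    (Φ : A →L[ℂ] A) (hΦJ : ∀ x ∈ J, Φ x ∈ J)
    (Φ₀ : J →L[ℂ] J) (hΦ₀ : ∀ x : J, (Φ₀ x : A) = Φ (x : A)) :
    ∀ n : ℕ, 1 ≤ n → hilbertNum Φ₀ n ≤ hilbertNum Φ n :=
  hilbertNum_restrict_le_general J hJr Φ Φ₀ hΦ₀
end
end
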